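/- (Sign-change semicontinuity) Let (x_k) be a sequence in ℝ^n converging to x ≠ 0. Then liminf_{k→∞} S^-(x_k) ≥ S^-(x) and limsup_{k→∞} S^+(x_k) ≤ S^+(x). -/

import Mathlib

open Matrix Filter

/-- Number of sign changes in a list of reals (consecutive pairs with negative product). -/
noncomputable def signChanges (l : List ℝ) : ℕ :=
  (l.zip l.tail).countP (fun p => decide (p.1 * p.2 < 0))

/-- `S^-(v)`: sign changes of the coordinates of `v` after discarding zero entries. -/
noncomputable def Sm {n : ℕ} (v : Fin n → ℝ) : ℕ :=
  signChanges ((List.ofFn v).filter (fun x => decide (x ≠ 0)))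

/-- `S^+(v)`: maximal number of sign changes over all ±1 completions of the zero
entries of `v`, with the convention `S^+(0) = n`. -/
noncomputable def Sp {n : ℕ} (v : Fin n → ℝ) : ℕ :=
  if v = 0 then n
  else Finset.univ.sup (fun σ : Fin n → Bool =>
    signChanges (List.ofFn (fun i => if v i = 0 then (if σ i then (1:ℝ) else -1) else v i)))

/-- First nonzero entry of a vector (`0` if the vector is zero). -/
noncomputable def firstNz {n : ℕ} (v : Fin n → ℝ) : ℝ :=
  ((List.ofFn v).filter (fun x => decide (x ≠ 0))).headI

/-- `A` is strictly sign regular with sign pattern `ε`: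
every `r × r` minor (`1 ≤ r ≤ min m n`) is nonzero with sign `ε r`. -/
def ssrPattern {m n : ℕ} (A : Matrix (Fin m) (Fin n) ℝ) (ε : ℕ → ℝ) : Prop :=
  ∀ r : ℕ, 1 ≤ r → r ≤ min m n → ∀ (f : Fin r → Fin m) (g : Fin r → Fin n),
    StrictMono f → StrictMono g → 0 < ε r * (A.submatrix f g).det

/-- `A` is sign regular with sign pattern `ε`:
every nonzero `r × r` minor (`1 ≤ r ≤ min m n`) has sign `ε r`. -/
def srPattern {m n : ℕ} (A : Matrix (Fin m) (Fin n) ℝ) (ε : ℕ → ℝ) : Prop :=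
  ∀ r : ℕ, 1 ≤ r → r ≤ min m n → ∀ (f : Fin r → Fin m) (g : Fin r → Fin n),
    StrictMono f → StrictMono g → 0 ≤ ε r * (A.submatrix f g).det

/-- The map `f` picks out consecutive indices. -/
def Contig {r m : ℕ} (f : Fin r → Fin m) : Prop :=
  ∃ a : ℕ, ∀ i : Fin r, (f i : ℕ) = a + (i : ℕ)

/-!
Once `x_k` is close to `x`, each nonzero coordinate of `x` has the same sign in `x_k`. The nonzero
entries of `x` then form, up to signs, a subsequence of the nonzero entries of `x_k`, and deleting
terms of a sequence of nonzero reals cannot create sign changes; so `S⁻(x) ≤ S⁻(x_k)`. Dually,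
every ±1 completion of the zeros of `x_k` induces a completion of the zeros of `x` with the same
sign pattern, so `S⁺(x_k) ≤ S⁺(x)`; here `x ≠ 0` keeps `x_k ≠ 0`, away from the convention
`S⁺(0) = n`.
-/

theorem signChanges_cons_cons (a b : ℝ) (l : List ℝ) :
    signChanges (a :: b :: l) = (if a * b < 0 then 1 else 0) + signChanges (b :: l) := by
  by_cases h : a * b < 0 <;> simp [signChanges, h, add_comm]

theorem signChanges_le_cons (a : ℝ) (l : List ℝ) : signChanges l ≤ signChanges (a :: l) := by
  cases l with
  | nil => exact le_rfl
  | cons b l => rw [signChanges_cons_cons]; omega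

theorem mul_neg_or_mul_neg_of_mul_neg {a b c : ℝ} (hb : b ≠ 0) (h : a * c < 0) :
    a * b < 0 ∨ b * c < 0 := by
  by_contra! h'
  have hsq : 0 < b ^ 2 := sq_pos_of_ne_zero hb
  nlinarith [mul_nonneg h'.1 h'.2]

theorem signChanges_cons_le_cons_cons (a : ℝ) {b : ℝ} (hb : b ≠ 0) (l : List ℝ) :
    signChanges (a :: l) ≤ signChanges (a :: b :: l) := by
  cases l with
  | nil => exact Nat.zero_le _
  | cons c l =>
    simp only [signChanges_cons_cons]
    by_cases hac : a * c < 0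
    · rcases mul_neg_or_mul_neg_of_mul_neg hb hac with h | h <;> simp [hac, h]
    · simp only [hac, if_false]; omega

theorem signChanges_cons_le_of_sublist {s t : List ℝ} (hst : s.Sublist t)
    (ht : ∀ b ∈ t, b ≠ 0) (a : ℝ) : signChanges (a :: s) ≤ signChanges (a :: t) := by
  induction hst generalizing a with
  | slnil => exact le_rfl
  | @cons s t b _ ih =>
    exact (ih (fun c hc => ht c (.tail _ hc)) a).trans
      (signChanges_cons_le_cons_cons a (ht b (.head _)) t)
  | @cons_cons s t b _ ih =>
    simp only [signChanges_cons_cons]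
    exact Nat.add_le_add_left (ih (fun c hc => ht c (.tail _ hc)) b) _

theorem signChanges_le_of_sublist {s t : List ℝ} (hst : s.Sublist t) (ht : ∀ b ∈ t, b ≠ 0) :
    signChanges s ≤ signChanges t := by
  induction hst with
  | slnil => exact le_rfl
  | @cons s t b _ ih =>
    exact (ih fun c hc => ht c (.tail _ hc)).trans (signChanges_le_cons b t)
  | @cons_cons s t b hst _ =>
    exact signChanges_cons_le_of_sublist hst (fun c hc => ht c (.tail _ hc)) b

theorem signChanges_eq_of_forall₂ {s t : List ℝ}
    (hst : List.Forall₂ (fun a b => 0 < a * b) s t) :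
    signChanges s = signChanges t := by
  induction hst with
  | nil => rfl
  | @cons a b s t hab hst ih =>
    cases hst with
    | nil => rfl
    | @cons c d s t hcd _ =>
      rw [signChanges_cons_cons, signChanges_cons_cons, ih]
      -- `(a * c) * (b * d) = (a * b) * (c * d) > 0`
      have : a * c < 0 ↔ b * d < 0 := by constructor <;> intro <;> nlinarith [mul_pos hab hcd]
      simp only [this]

theorem signChanges_filter_fst_le_snd (L : List (ℝ × ℝ))
    (hL : ∀ p ∈ L, p.1 ≠ 0 → 0 < p.1 * p.2) :
    signChanges ((L.map Prod.fst).filter (· ≠ 0)) ≤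
      signChanges ((L.map Prod.snd).filter (· ≠ 0)) := by
  have hsub : (L.filter (·.1 ≠ 0)).Sublist (L.filter (·.2 ≠ 0)) := by
    have : L.filter (·.1 ≠ 0) = (L.filter (·.2 ≠ 0)).filter (·.1 ≠ 0) := by
      rw [List.filter_filter]
      refine List.filter_congr fun p hp => ?_
      by_cases h1 : p.1 = 0
      · simp [h1]
      · have h2 : p.2 ≠ 0 := by rintro h2; simpa [h2] using hL p hp h1
        simp [h1, h2]
    exact this ▸ List.filter_sublist
  simp only [List.filter_map, Function.comp_def]
  calc _ = signChanges ((L.filter (·.1 ≠ 0)).map Prod.snd) := by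
        refine signChanges_eq_of_forall₂ ?_
        rw [List.forall₂_map_left_iff, List.forall₂_map_right_iff, List.forall₂_same]
        intro p hp
        rw [List.mem_filter] at hp
        exact hL p hp.1 (by simpa using hp.2)
    _ ≤ _ := signChanges_le_of_sublist (hsub.map _) (by simp)

theorem Sm_le_Sm_of_sign_agree {n : ℕ} {x y : Fin n → ℝ}
    (h : ∀ i, x i ≠ 0 → 0 < x i * y i) : Sm x ≤ Sm y := by
  simpa [Sm, List.map_ofFn, Function.comp_def] using
    signChanges_filter_fst_le_snd (List.ofFn fun i => (x i, y i)) (by simpa using h)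

theorem Sp_le_Sp_of_sign_agree {n : ℕ} {x y : Fin n → ℝ} (hx : x ≠ 0)
    (h : ∀ i, x i ≠ 0 → 0 < x i * y i) : Sp y ≤ Sp x := by
  have hy : y ≠ 0 := by
    obtain ⟨i, hi⟩ := Function.ne_iff.1 hx
    rintro rfl
    simpa using h i hi
  rw [Sp, Sp, if_neg hx, if_neg hy]
  refine Finset.sup_le fun σ _ => ?_
  set u : Fin n → ℝ := fun i => if y i = 0 then (if σ i then 1 else -1) else y i
  -- fill the zeros of `x` with the signs of the completion `u` of `y`
  have hu : ∀ i, 0 < u i * (if x i = 0 then (if decide (0 < u i) then 1 else -1) else x i) := by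
    intro i
    by_cases hxi : x i = 0
    · have hu0 : u i ≠ 0 := by
        simp only [u]; split_ifs <;> first | assumption | norm_num
      rw [if_pos hxi]
      rcases hu0.lt_or_gt with hneg | hpos
      · simpa [hneg.not_gt] using hneg
      · simp [hpos]
    · have hyi : y i ≠ 0 := by rintro hyi; simpa [hyi] using h i hxi
      simpa only [u, if_neg hxi, if_neg hyi, mul_comm] using h i hxi
  refine le_of_eq_of_le (signChanges_eq_of_forall₂ ?_)
    (Finset.le_sup (f := fun σ : Fin n → Bool => signChanges (List.ofFn fun i =>
      if x i = 0 then (if σ i then (1 : ℝ) else -1) else x i))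
      (Finset.mem_univ fun i => decide (0 < u i)))
  simp only [List.ofFn_eq_map, List.forall₂_map_left_iff, List.forall₂_map_right_iff,
    List.forall₂_same]
  exact fun i _ => hu i

theorem signChanges_le_length (l : List ℝ) : signChanges l ≤ l.length :=
  List.countP_le_length.trans (by simp)

theorem Sm_le {n : ℕ} (v : Fin n → ℝ) : Sm v ≤ n :=
  (signChanges_le_length _).trans ((List.length_filter_le _ _).trans List.length_ofFn.le)

theorem eventually_sign_agree {ι α : Type*} [Finite ι] {l : Filter α} {f : α → ι → ℝ}
    {x : ι → ℝ} (hf : Tendsto f l (nhds x)) :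
    ∀ᶠ k in l, ∀ i, x i ≠ 0 → 0 < x i * f k i := by
  refine eventually_all.2 fun i => ?_
  by_cases hxi : x i = 0
  · exact .of_forall fun _ h => absurd hxi h
  · have hprod : Tendsto (fun k => x i * f k i) l (nhds (x i * x i)) :=
      (tendsto_pi_nhds.1 hf i).const_mul (x i)
    exact (hprod.eventually (lt_mem_nhds (mul_self_pos.2 hxi))).mono fun _ hk _ => hk

theorem stmt10 {n : ℕ} (xk : ℕ → (Fin n → ℝ)) (x : Fin n → ℝ) (hx : x ≠ 0)
    (hconv : Filter.Tendsto xk Filter.atTop (nhds x)) :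
    Sm x ≤ Filter.liminf (fun k => Sm (xk k)) Filter.atTop ∧
      Filter.limsup (fun k => Sp (xk k)) Filter.atTop ≤ Sp x := by
  have hagree := eventually_sign_agree hconv
  constructor
  · exact le_liminf_of_le (isCoboundedUnder_ge_of_le _ fun k => Sm_le (xk k))
      (hagree.mono fun _ => Sm_le_Sm_of_sign_agree)
  · exact limsup_le_of_le (isCoboundedUnder_le_of_le _ fun _ => Nat.zero_le _)
      (hagree.mono fun _ => Sp_le_Sp_of_sign_agree hx)
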